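/- arXiv:1105.5341 — 3 statements merged into one kernel-verified Lean document; each statement's English description precedes it below -/
import Mathlib

section
/- Let X be a finite indecomposable quandle, let x₀ ∈ X, let G = Inn(X) be the inner group of X, let H = Stab_G(x₀) = {g ∈ G | g(x₀) = x₀} be the stabilizer of x₀, and let z = φ_{x₀} be the left translation by x₀. Then z ∈ H and z is a central element of H, i.e. z·h = h·z for all h ∈ H. -/
open Quandles

/-- The inner group of a rack: the subgroup of the permutation group of `X`
generated by the left-translation permutations `φᵢ = Rack.act' i`. -/
def innerGroup (X : Type*) [Rack X] : Subgroup (Equiv.Perm X) :=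
  Subgroup.closure (Set.range fun i : X => Rack.act' i)

/-!
Inner automorphisms are rack automorphisms, and conjugating `φ_j` by a rack automorphism `g`
gives `φ_{g j}`. Hence an inner automorphism `h` fixing `x₀` satisfies `h φ_{x₀} h⁻¹ = φ_{x₀}`.
-/

def rackAutGroup (X : Type*) [Rack X] : Subgroup (Equiv.Perm X) where
  carrier := {g | ∀ x y, g (x ◃ y) = g x ◃ g y}
  one_mem' _ _ := rfl
  mul_mem' {f g} hf hg x y := by
    simp only [Equiv.Perm.coe_mul, Function.comp_apply, hg x y, hf (g x) (g y)]
  inv_mem' {g} hg x y := g.injective <| by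
    simp only [Equiv.Perm.coe_inv, hg _ _, Equiv.apply_symm_apply]

section

variable {X : Type*} [Rack X]

lemma act'_mem_rackAutGroup (i : X) : Rack.act' i ∈ rackAutGroup X :=
  fun _ _ => Shelf.self_distrib

lemma innerGroup_le_rackAutGroup : innerGroup X ≤ rackAutGroup X :=
  (Subgroup.closure_le _).2 <| Set.range_subset_iff.2 act'_mem_rackAutGroup

lemma conj_act'_of_mem_rackAutGroup {g : Equiv.Perm X} (hg : g ∈ rackAutGroup X) (j : X) :
    g * Rack.act' j * g⁻¹ = Rack.act' (g j) := by
  ext y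
  simp [Rack.act'_apply, hg j]

lemma act'_commute_of_mem_innerGroup {h : Equiv.Perm X} (hh : h ∈ innerGroup X) {x : X}
    (hx : h x = x) : Commute (Rack.act' x) h := by
  have hconj := conj_act'_of_mem_rackAutGroup (innerGroup_le_rackAutGroup hh) x
  rw [hx, mul_inv_eq_iff_eq_mul] at hconj
  exact hconj.symm

end

theorem stmt0_general {X : Type*} [Quandle X] (x₀ : X) :
    (Rack.act' x₀ ∈ innerGroup X ∧ Rack.act' x₀ x₀ = x₀) ∧
      ∀ h : Equiv.Perm X, h ∈ innerGroup X → h x₀ = x₀ →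
        Rack.act' x₀ * h = h * Rack.act' x₀ :=
  ⟨⟨Subgroup.subset_closure ⟨x₀, rfl⟩, Quandle.fix⟩,
    fun _ hh hfix => act'_commute_of_mem_innerGroup hh hfix⟩

/-- Let `X` be a finite indecomposable quandle, `x₀ ∈ X`, `G = Inn(X)`,
`H = Stab_G(x₀)` and `z = φ_{x₀}`.  Then `z ∈ H` (i.e. `z` belongs to the inner
group and fixes `x₀`) and `z` is central in `H`. -/
theorem stmt0 {X : Type*} [Fintype X] [Quandle X]
    (hconn : ∀ x y : X, ∃ g ∈ innerGroup X, g x = y) (x₀ : X) :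
    (Rack.act' x₀ ∈ innerGroup X ∧ Rack.act' x₀ x₀ = x₀) ∧
      ∀ h : Equiv.Perm X, h ∈ innerGroup X → h x₀ = x₀ →
        Rack.act' x₀ * h = h * Rack.act' x₀ :=
  stmt0_general x₀
end

section
/- Let X be a finite indecomposable quandle, let x₀ ∈ X, let G = Inn(X), and let z = φ_{x₀}. Define a binary operation on G by x ▷ y = x·z·x⁻¹·y·z⁻¹ (that is, x ▷ y = x·I_z(x⁻¹y) where I_z is conjugation by z). Then (G, ▷) is a quandle and the evaluation map e : G → X, g ↦ g(x₀), is a surjective morphism of quandles, i.e. e(x ▷ y) = e(x) ▷ e(y) for all x, y ∈ G. -/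
open Quandles

/-!
The quandle axioms for `x ▷ y = x z x⁻¹ y z⁻¹` are group identities, valid in any group.
Every element `g` of `Inn(X)` is a quandle automorphism, because each generator `φᵢ` is one
by self-distributivity; hence `g φ_{x₀} g⁻¹ = φ_{g x₀}`. Since `z = φ_{x₀}` fixes `x₀`, evaluating
at `x₀` gives `(x z x⁻¹ y z⁻¹) x₀ = φ_{x x₀} (y x₀) = x x₀ ◃ y x₀`.
-/

section TwistedConj

variable {G : Type*} [Group G]

def twistedConj (z x y : G) : G := x * z * x⁻¹ * y * z⁻¹

variable (z : G)

theorem twistedConj_bijective (x : G) : Function.Bijective (twistedConj z x) :=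
  (Group.mulRight_bijective z⁻¹).comp (Group.mulLeft_bijective (x * z * x⁻¹))

theorem twistedConj_self_distrib (x y w : G) :
    twistedConj z x (twistedConj z y w) =
      twistedConj z (twistedConj z x y) (twistedConj z x w) := by
  simp only [twistedConj]
  group

theorem twistedConj_self (x : G) : twistedConj z x x = x := by
  simp only [twistedConj]
  group

end TwistedConj

section RackAutomorphism

variable {X : Type*}

theorem map_act_of_mem_innerGroup [Rack X] {g : Equiv.Perm X} (hg : g ∈ innerGroup X)
    (a b : X) : g (a ◃ b) = g a ◃ g b := by
  induction hg using Subgroup.closure_induction generalizing a b with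
  | mem _ hx =>
    obtain ⟨i, rfl⟩ := hx
    exact Rack.self_distrib
  | one => rfl
  | mul x y _ _ ihx ihy => simp only [Equiv.Perm.mul_apply, ihy, ihx]
  | inv x _ ih =>
    exact x.injective (by simp only [Equiv.Perm.coe_inv, Equiv.apply_symm_apply, ih])

theorem mul_act'_mul_inv_of_map_act [Rack X] {g : Equiv.Perm X}
    (hg : ∀ a b, g (a ◃ b) = g a ◃ g b) (x : X) :
    g * Rack.act' x * g⁻¹ = Rack.act' (g x) := by
  ext a
  simp [Rack.act'_apply, hg]

theorem twistedConj_act'_apply_self [Quandle X] {g : Equiv.Perm X}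
    (hg : ∀ a b, g (a ◃ b) = g a ◃ g b) (h : Equiv.Perm X) (x : X) :
    twistedConj (Rack.act' x) g h x = g x ◃ h x := by
  rw [twistedConj, mul_act'_mul_inv_of_map_act hg]
  simp [Quandle.fix_inv, Rack.act'_apply]

end RackAutomorphism

theorem stmt1_general {X : Type*} [Quandle X]
    (hconn : ∀ x y : X, ∃ g ∈ innerGroup X, g x = y) (x₀ : X)
    (z : innerGroup X) (hz : (z : Equiv.Perm X) = Rack.act' x₀) :
    let op : innerGroup X → innerGroup X → innerGroup X :=
      fun x y => x * z * x⁻¹ * y * z⁻¹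
    let e : innerGroup X → X := fun g => (g : Equiv.Perm X) x₀
    (∀ x, Function.Bijective (op x)) ∧
      (∀ x y w, op x (op y w) = op (op x y) (op x w)) ∧
      (∀ x, op x x = x) ∧
      Function.Surjective e ∧
      (∀ x y, e (op x y) = e x ◃ e y) := by
  intro op e
  refine ⟨twistedConj_bijective z, twistedConj_self_distrib z, twistedConj_self z,
    fun y => ?_, fun x y => ?_⟩
  · obtain ⟨g, hg, rfl⟩ := hconn x₀ y
    exact ⟨⟨g, hg⟩, rfl⟩
  · have h := twistedConj_act'_apply_self (map_act_of_mem_innerGroup x.2) y x₀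
    rwa [← hz] at h

/-- Let `X` be a finite indecomposable quandle, `x₀ ∈ X`, `G = Inn(X)` and
`z = φ_{x₀}` (as an element of `G`).  Equip `G` with the binary operation
`x ▷ y = x·z·x⁻¹·y·z⁻¹`.  Then `(G, ▷)` is a quandle, and the evaluation map
`e : G → X`, `g ↦ g(x₀)`, is a surjective quandle morphism. -/
theorem stmt1 {X : Type*} [Fintype X] [Quandle X]
    (hconn : ∀ x y : X, ∃ g ∈ innerGroup X, g x = y) (x₀ : X)
    (z : innerGroup X) (hz : (z : Equiv.Perm X) = Rack.act' x₀) :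
    let op : innerGroup X → innerGroup X → innerGroup X :=
      fun x y => x * z * x⁻¹ * y * z⁻¹
    let e : innerGroup X → X := fun g => (g : Equiv.Perm X) x₀
    (∀ x, Function.Bijective (op x)) ∧
      (∀ x y w, op x (op y w) = op (op x y) (op x w)) ∧
      (∀ x, op x x = x) ∧
      Function.Surjective e ∧
      (∀ x y, e (op x y) = e x ◃ e y) :=
  stmt1_general hconn x₀ z hz
end

section
/- Let T be the tetrahedron quandle, i.e. the conjugacy class of the 3-cycle (1 2 3) in A₄ with x ▷ y = x·y·x⁻¹. Every permutation φ_x of T has order 3, and the finite enveloping group of T, namely the quotient of the enveloping group G_T = F(T)/⟨x·y·x⁻¹ = x ▷ y⟩ by the normal subgroup generated by the elements x³ for x ∈ T, is isomorphic to SL(2, 3), the special linear group of 2×2 matrices over the field with three elements. -/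
open Quandles

/-- The alternating group `A₄` on four letters. -/
def A4 : Subgroup (Equiv.Perm (Fin 4)) := alternatingGroup (Fin 4)

/-- The 3-cycle `(1 2 3)` as an element of `A₄`. -/
def c123 : A4 :=
  ⟨c[(0 : Fin 4), 1, 2], by
    show _ ∈ alternatingGroup (Fin 4); rw [Equiv.Perm.mem_alternatingGroup]; decide⟩

/-- The tetrahedron quandle: the conjugacy class of `(1 2 3)` in `A₄`. -/
def T : Set A4 := {x | ∃ h : A4, h * c123 * h⁻¹ = x}

lemma conj_mem_T (h : A4) {x : A4} (hx : x ∈ T) : h * x * h⁻¹ ∈ T := by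
  obtain ⟨k, rfl⟩ := hx
  exact ⟨h * k, by group⟩

/-- The conjugation quandle structure on the tetrahedron quandle `T`:
`x ▷ y = x·y·x⁻¹`. -/
instance : Quandle T where
  act x y := ⟨x * y * (x : A4)⁻¹, conj_mem_T x y.2⟩
  self_distrib := by
    rintro ⟨x, _⟩ ⟨y, _⟩ ⟨z, _⟩
    apply Subtype.ext
    show x * (y * z * y⁻¹) * x⁻¹ =
      (x * y * x⁻¹) * (x * z * x⁻¹) * (x * y * x⁻¹)⁻¹
    group
  invAct x y := ⟨(x : A4)⁻¹ * y * x, by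
    simpa using conj_mem_T (x : A4)⁻¹ y.2⟩
  left_inv := by
    rintro ⟨x, _⟩ ⟨y, _⟩
    apply Subtype.ext
    show x⁻¹ * (x * y * x⁻¹) * x = y
    group
  right_inv := by
    rintro ⟨x, _⟩ ⟨y, _⟩
    apply Subtype.ext
    show x * (x⁻¹ * y * x) * x⁻¹ = y
    group
  fix := by
    rintro ⟨x, _⟩
    apply Subtype.ext
    show x * x * x⁻¹ = x
    group

/-!
In a group generated by the image of a quandle map `f` from a rack, the elements `f t * (f s)⁻¹`
generate a subgroup `K` normalised by `f s`, because conjugation by `f s` permutes them; so the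
group is `K * ⟨f s⟩`. For the tetrahedron quandle and `s = a`, the elements
`i = f b * (f a)⁻¹`, `j = f c * (f a)⁻¹`, `k = f d * (f a)⁻¹` satisfy the quaternion relations
`j * i = k`, `k * j = i`, `i * k = j`, so `K = ⟨i, j⟩` has at most `8` elements. In the finite
enveloping group `f a ^ 3 = 1`, so it has at most `24` elements, and it maps onto `SL(2, 3)`,
which has `24` elements.
-/

open Subgroup Pointwise

section Quaternion

variable {G : Type*} [Group G] {i j : G} (hiji : i * j * i = j) (hjij : j * i * j = i)
include hiji

theorem mul_eq_mul_inv_of_mul_mul_eq : i * j = j * i⁻¹ := by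
  conv_rhs => rw [← hiji]
  group

theorem inv_mul_eq_mul_of_mul_mul_eq : i⁻¹ * j = j * i := by
  conv_lhs => rw [← hiji]
  group

include hjij

theorem mul_self_eq_mul_self_of_mul_mul_eq : j * j = i * i :=
  calc j * j = j * (i * j * i) := by rw [hiji]
    _ = (j * i * j) * i := by group
    _ = i * i := by rw [hjij]

theorem pow_four_eq_one_of_mul_mul_eq : i ^ 4 = 1 := by
  have hsq := mul_self_eq_mul_self_of_mul_mul_eq hiji hjij
  have hij := mul_eq_mul_inv_of_mul_mul_eq hiji
  -- `j * j = i * i` commutes with `j`, whereas `j` conjugates `i` to `i⁻¹`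
  have h : j * (i * i) = j * (i * i)⁻¹ :=
    calc j * (i * i) = j * j * j := by rw [← hsq, mul_assoc]
      _ = i * (i * j) := by rw [hsq, mul_assoc]
      _ = j * (i * i)⁻¹ := by rw [hij, ← mul_assoc, hij]; group
  calc i ^ 4 = i * i * (i * i) := by simp only [pow_succ, pow_zero, one_mul, mul_assoc]
    _ = 1 := mul_eq_one_iff_eq_inv.2 (mul_left_cancel h)

theorem closure_pair_subset_of_mul_mul_eq :
    (closure {i, j} : Set G) ⊆ ({1, j} : Set G) * zpowers i := by
  have hsq := mul_self_eq_mul_self_of_mul_mul_eq hiji hjij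
  have hij := mul_eq_mul_inv_of_mul_mul_eq hiji
  have hij' := inv_mul_eq_mul_of_mul_mul_eq hiji
  have hjinv : j⁻¹ = j * i ^ (-2 : ℤ) := by
    rw [zpow_neg, zpow_two, ← hsq]
    group
  suffices ∀ g ∈ closure {i, j}, ∃ n : ℤ, g = i ^ n ∨ g = j * i ^ n by
    intro g hg
    obtain ⟨n, rfl | rfl⟩ := this g hg
    · exact ⟨1, .inl rfl, _, ⟨n, rfl⟩, one_mul _⟩
    · exact ⟨j, .inr rfl, _, ⟨n, rfl⟩, rfl⟩
  intro g hg
  induction hg using closure_induction_left with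
  | one => exact ⟨0, .inl (zpow_zero i).symm⟩
  | mul_left x hx y _ ih =>
    obtain ⟨n, rfl | rfl⟩ := ih <;> rcases hx with rfl | rfl
    · exact ⟨1 + n, .inl (zpow_one_add x n).symm⟩
    · exact ⟨n, .inr rfl⟩
    · exact ⟨-1 + n, .inr (by rw [zpow_add, zpow_neg_one, ← mul_assoc, hij, mul_assoc])⟩
    · exact ⟨2 + n, .inl (by rw [zpow_add, zpow_two, ← mul_assoc, hsq])⟩
  | inv_mul_cancel x hx y _ ih =>
    obtain ⟨n, rfl | rfl⟩ := ih <;> rcases hx with rfl | rfl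
    · exact ⟨-1 + n, .inl (by rw [zpow_add, zpow_neg_one])⟩
    · exact ⟨-2 + n, .inr (by rw [zpow_add, hjinv, mul_assoc])⟩
    · exact ⟨1 + n, .inr (by rw [zpow_add, zpow_one, ← mul_assoc, hij', mul_assoc])⟩
    · exact ⟨n, .inl (inv_mul_cancel_left x _)⟩

end Quaternion

theorem finite_zpowers_and_natCard_le {G : Type*} [Group G] {x : G} {n : ℕ} (hn : 0 < n)
    (hx : x ^ n = 1) : (zpowers x : Set G).Finite ∧ Nat.card (zpowers x) ≤ n :=
  ⟨(isOfFinOrder_iff_pow_eq_one.2 ⟨n, hn, hx⟩).finite_zpowers,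
    Nat.card_zpowers x ▸ orderOf_le_of_pow_eq_one hn hx⟩

namespace Rack

variable {R : Type*} [Rack R] {G : Type*} [Group G]

theorem closure_range_toEnvelGroup : closure (Set.range (toEnvelGroup R)) = ⊤ := by
  refine (eq_top_iff' _).2 fun z => ?_
  induction z using Quotient.inductionOn with
  | h w =>
    induction w with
    | unit => exact one_mem _
    | incl x => exact subset_closure ⟨x, rfl⟩
    | mul a b iha ihb => exact mul_mem iha ihb
    | inv a iha => exact inv_mem iha

theorem conj_mul_inv (f : R →◃ Quandle.Conj G) (s t : R) :
    (f s : G) * ((f t : G) * (f s : G)⁻¹) * (f s : G)⁻¹ = (f (s ◃ t) : G) * (f s : G)⁻¹ := by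
  rw [f.map_act, Quandle.conj_act_eq_conj]
  group

theorem conj_image_range_mul_inv (f : R →◃ Quandle.Conj G) (s : R) :
    MulAut.conj (f s : G) '' Set.range (fun t => (f t : G) * (f s : G)⁻¹) =
      Set.range (fun t => (f t : G) * (f s : G)⁻¹) := by
  rw [← Set.range_comp]
  conv_rhs => rw [← (act' s).surjective.range_comp]
  congr 1
  ext t
  exact conj_mul_inv f s t

theorem closure_range_subset_mul_zpowers (f : R →◃ Quandle.Conj G) (s : R) :
    (closure (Set.range f) : Set G) ⊆
      closure (Set.range fun t => (f t : G) * (f s : G)⁻¹) * zpowers (f s : G) := by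
  set K := closure (Set.range fun t => (f t : G) * (f s : G)⁻¹)
  have hnorm : zpowers (f s : G) ≤ normalizer (K : Set G) :=
    zpowers_le.2 <| normalizer_le_normalizer_closure _ <|
      mem_normalizer_iff_conj_image_eq.2 (conj_image_range_mul_inv f s)
  rw [← coe_mul_of_right_le_normalizer_left K _ hnorm]
  refine SetLike.coe_subset_coe.2 ((closure_le _).2 ?_)
  rintro _ ⟨t, rfl⟩
  rw [SetLike.mem_coe, ← inv_mul_cancel_right (f t : G) (f s)]
  exact mul_mem (mem_sup_left (subset_closure ⟨t, rfl⟩)) (mem_sup_right (mem_zpowers _))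

variable (R) (n : ℕ)

def powNormalClosure : Subgroup (EnvelGroup R) :=
  normalClosure {w | ∃ x : R, w = toEnvelGroup R x ^ n}

instance : (powNormalClosure R n).Normal := normalClosure_normal

def toPowQuotient : R →◃ Quandle.Conj (EnvelGroup R ⧸ powNormalClosure R n) :=
  (Quandle.Conj.map (QuotientGroup.mk' _)).comp (toEnvelGroup R)

theorem closure_range_toPowQuotient : closure (Set.range (toPowQuotient R n)) = ⊤ := by
  have : Set.range (toPowQuotient R n) =
      QuotientGroup.mk' (powNormalClosure R n) '' Set.range (toEnvelGroup R) :=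
    Set.range_comp (QuotientGroup.mk' (powNormalClosure R n)) (toEnvelGroup R)
  rw [this, ← MonoidHom.map_closure, closure_range_toEnvelGroup, ← MonoidHom.range_eq_map,
    MonoidHom.range_eq_top]
  exact QuotientGroup.mk'_surjective _

theorem toPowQuotient_pow (x : R) :
    (toPowQuotient R n x : EnvelGroup R ⧸ powNormalClosure R n) ^ n = 1 :=
  (QuotientGroup.eq_one_iff _).2 (subset_normalClosure ⟨x, rfl⟩)

variable {R n}

def powQuotientLift (f : R →◃ Quandle.Conj G) (hf : ∀ x, (f x : G) ^ n = 1) :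
    EnvelGroup R ⧸ powNormalClosure R n →* G :=
  QuotientGroup.lift _ (toEnvelGroup.map f) <| normalClosure_le_normal <| by
    rintro _ ⟨x, rfl⟩
    exact (map_pow _ _ _).trans (hf x)

theorem powQuotientLift_toPowQuotient (f : R →◃ Quandle.Conj G) (hf : ∀ x, (f x : G) ^ n = 1)
    (x : R) : powQuotientLift f hf (toPowQuotient R n x) = f x :=
  rfl

end Rack

instance : DecidablePred (· ∈ A4) := fun _ =>
  decidable_of_iff _ Equiv.Perm.mem_alternatingGroup.symm

instance : DecidablePred (· ∈ T) := fun x =>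
  decidable_of_iff (∃ h : A4, h * c123 * h⁻¹ = x) Iff.rfl

namespace T

def a : T := ⟨c123, 1, by decide⟩
def b : T := ⟨⟨c[1, 3, 2], by decide⟩, by decide⟩
def c : T := ⟨⟨c[0, 2, 3], by decide⟩, by decide⟩
def d : T := ⟨⟨c[0, 3, 1], by decide⟩, by decide⟩

theorem eq_a_or_b_or_c_or_d : ∀ x : T, x = a ∨ x = b ∨ x = c ∨ x = d := by decide

theorem a_act_b : a ◃ b = c := by decide
theorem a_act_c : a ◃ c = d := by decide
theorem a_act_d : a ◃ d = b := by decide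
theorem d_act_a : d ◃ a = c := by decide

theorem act_act_act : ∀ x y : T, x ◃ x ◃ x ◃ y = y := by decide +kernel

theorem exists_act_ne : ∀ x : T, ∃ y : T, x ◃ y ≠ y := by decide

theorem orderOf_act' (x : T) : orderOf (Rack.act' x) = 3 := by
  have : Fact (Nat.Prime 3) := ⟨Nat.prime_three⟩
  refine orderOf_eq_prime (Equiv.ext fun y => act_act_act x y) fun h => ?_
  obtain ⟨y, hy⟩ := exists_act_ne x
  exact hy (Equiv.ext_iff.1 h y)

section

variable {G : Type*} [Group G] (f : T →◃ Quandle.Conj G)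

def quatI : G := f b * (f a : G)⁻¹

def quatJ : G := f c * (f a : G)⁻¹

def quatK : G := f d * (f a : G)⁻¹

theorem conj_quatI : (f a : G) * quatI f * (f a : G)⁻¹ = quatJ f := by
  rw [quatI, Rack.conj_mul_inv, a_act_b, quatJ]

theorem conj_quatJ : (f a : G) * quatJ f * (f a : G)⁻¹ = quatK f := by
  rw [quatJ, Rack.conj_mul_inv, a_act_c, quatK]

theorem conj_quatK : (f a : G) * quatK f * (f a : G)⁻¹ = quatI f := by
  rw [quatK, Rack.conj_mul_inv, a_act_d, quatI]

theorem quatJ_mul_quatI : quatJ f * quatI f = quatK f := by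
  have hb : (f b : G) = f a * f d * (f a)⁻¹ := by rw [← a_act_d, f.map_act]; rfl
  have hc : (f c : G) = f d * f a * (f d)⁻¹ := by rw [← d_act_a, f.map_act]; rfl
  rw [quatI, quatJ, quatK, hb, hc]
  group

theorem quatK_mul_quatJ : quatK f * quatJ f = quatI f :=
  calc quatK f * quatJ f = (f a * quatJ f * (f a)⁻¹) * (f a * quatI f * (f a)⁻¹) := by
        rw [conj_quatJ, conj_quatI]
    _ = f a * (quatJ f * quatI f) * (f a)⁻¹ := by group
    _ = quatI f := by rw [quatJ_mul_quatI, conj_quatK]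

theorem quatI_mul_quatK : quatI f * quatK f = quatJ f :=
  calc quatI f * quatK f = (f a * quatK f * (f a)⁻¹) * (f a * quatJ f * (f a)⁻¹) := by
        rw [conj_quatK, conj_quatJ]
    _ = f a * (quatK f * quatJ f) * (f a)⁻¹ := by group
    _ = quatJ f := by rw [quatK_mul_quatJ, conj_quatI]

theorem quatI_mul_quatJ_mul_quatI : quatI f * quatJ f * quatI f = quatJ f := by
  rw [mul_assoc, quatJ_mul_quatI, quatI_mul_quatK]

theorem quatJ_mul_quatI_mul_quatJ : quatJ f * quatI f * quatJ f = quatI f := by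
  rw [quatJ_mul_quatI, quatK_mul_quatJ]

theorem closure_range_subset :
    (closure (Set.range f) : Set G) ⊆
      ({1, quatJ f} : Set G) * zpowers (quatI f) * zpowers (f a : G) := by
  have hK : closure (Set.range fun t => (f t : G) * (f a : G)⁻¹) ≤
      closure {quatI f, quatJ f} := by
    rw [closure_le]
    rintro _ ⟨t, rfl⟩
    rcases eq_a_or_b_or_c_or_d t with rfl | rfl | rfl | rfl
    · simp
    · exact subset_closure (.inl rfl)
    · exact subset_closure (.inr rfl)
    · show quatK f ∈ closure {quatI f, quatJ f}
      rw [← quatJ_mul_quatI]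
      exact mul_mem (subset_closure (.inr rfl)) (subset_closure (.inl rfl))
  refine (Rack.closure_range_subset_mul_zpowers f a).trans (Set.mul_subset_mul_right ?_)
  exact (SetLike.coe_subset_coe.2 hK).trans (closure_pair_subset_of_mul_mul_eq
    (quatI_mul_quatJ_mul_quatI f) (quatJ_mul_quatI_mul_quatJ f))

theorem finite_and_natCard_le (hf : closure (Set.range f) = ⊤) (h3 : (f a : G) ^ 3 = 1) :
    Finite G ∧ Nat.card G ≤ 24 := by
  have hS := closure_range_subset f
  rw [hf, coe_top] at hS
  obtain ⟨hI, hI4⟩ := finite_zpowers_and_natCard_le (by norm_num) <|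
    pow_four_eq_one_of_mul_mul_eq (quatI_mul_quatJ_mul_quatI f) (quatJ_mul_quatI_mul_quatJ f)
  obtain ⟨hA, hA3⟩ := finite_zpowers_and_natCard_le (by norm_num) h3
  have hfin := ((Set.toFinite ({1, quatJ f} : Set G)).mul hI).mul hA
  have hpair : Nat.card ({1, quatJ f} : Set G) ≤ 2 := by
    rw [Nat.card_coe_set_eq]
    exact (Set.ncard_insert_le _ _).trans (by rw [Set.ncard_singleton])
  refine ⟨Set.finite_univ_iff.1 (hfin.subset hS), ?_⟩
  calc Nat.card G = Nat.card (Set.univ : Set G) := Nat.card_univ.symm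
    _ ≤ _ := Nat.card_mono hfin hS
    _ ≤ _ := Set.natCard_mul_le.trans (Nat.mul_le_mul_right _ Set.natCard_mul_le)
    _ ≤ 2 * 4 * 3 := Nat.mul_le_mul (Nat.mul_le_mul hpair hI4) hA3

end

open MatrixGroups

/-- `T` goes to the conjugacy class of the transvection `!![1, 1; 0, 1]`. -/
def toSL : T →◃ Quandle.Conj SL(2, ZMod 3) where
  toFun x :=
    if x = a then ⟨!![1, 0; 2, 1], by decide⟩
    else if x = b then ⟨!![0, 1; 2, 2], by decide⟩
    else if x = c then ⟨!![1, 1; 0, 1], by decide⟩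
    else ⟨!![2, 1; 2, 0], by decide⟩
  map_act' {x y} := by revert x y; decide

theorem toSL_pow_three : ∀ x : T, (toSL x : SL(2, ZMod 3)) ^ 3 = 1 := by decide

theorem exists_quatJ_pow_mul_quatI_pow_mul_pow_eq (M : SL(2, ZMod 3)) :
    ∃ p : Fin 2, ∃ q : Fin 4, ∃ r : Fin 3,
      quatJ toSL ^ (p : ℕ) * quatI toSL ^ (q : ℕ) * (toSL a : SL(2, ZMod 3)) ^ (r : ℕ) = M := by
  revert M
  decide

theorem natCard_SL : Nat.card SL(2, ZMod 3) = 24 := by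
  rw [Nat.card_eq_fintype_card]
  decide

theorem powQuotientLift_toSL_surjective :
    Function.Surjective (Rack.powQuotientLift toSL toSL_pow_three) := by
  intro M
  obtain ⟨p, q, r, rfl⟩ := exists_quatJ_pow_mul_quatI_pow_mul_pow_eq M
  set e := Rack.toPowQuotient T 3
  refine ⟨quatJ e ^ (p : ℕ) * quatI e ^ (q : ℕ) * (e a) ^ (r : ℕ), ?_⟩
  simp only [quatI, quatJ, map_mul, map_pow, map_inv, e, Rack.powQuotientLift_toPowQuotient]

end T

/-- Every permutation `φₓ` of the tetrahedron quandle `T` has order `3`, and the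
finite enveloping group of `T`, i.e. the quotient of the enveloping group `G_T`
by the normal subgroup generated by the cubes `x³` of the generators `x ∈ T`,
is isomorphic to `SL(2, 3)`. -/
theorem stmt11 :
    (∀ x : T, orderOf (Rack.act' x) = 3) ∧
    Nonempty ((Rack.EnvelGroup T ⧸ Subgroup.normalClosure
        {w : Rack.EnvelGroup T | ∃ x : T, w = (Rack.toEnvelGroup T x) ^ 3}) ≃*
      Matrix.SpecialLinearGroup (Fin 2) (ZMod 3)) := by
  obtain ⟨hfinite, hcard⟩ := T.finite_and_natCard_le (Rack.toPowQuotient T 3)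
    (Rack.closure_range_toPowQuotient T 3) (Rack.toPowQuotient_pow T 3 T.a)
  exact ⟨T.orderOf_act', ⟨MulEquiv.ofBijective _ <|
    T.powQuotientLift_toSL_surjective.bijective_of_nat_card_le (hcard.trans T.natCard_SL.ge)⟩⟩
end
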